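/- arXiv:math/0601590 — 6 statements merged into one kernel-verified Lean document; each statement's English description precedes it below -/
import Mathlib

section
/- Let G be a group in which every conjugacy class is finite (an FC-group). Then the set of torsion elements of G forms a subgroup of G. -/
/-!
Fix torsion elements `a, b` and let `H` be the subgroup they generate. Both have finite
conjugacy classes, so their centralizers have finite index, hence so does the center of `H`.
Commutators in `H` then only depend on cosets of the center, so there are finitely many, and by
Schur's theorem the commutator subgroup `H'` is finite. The image of `a * b` in the abelian group
`H / H'` is torsion, so some power `(a * b) ^ n` lies in the finite group `H'` and is torsion.
-/

open Subgroup
open scoped commutatorElement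

section

variable {G : Type*} [Group G]

lemma finiteIndex_centralizer_of_finite_conj (g : G)
    (hg : {h : G | ∃ x : G, x⁻¹ * g * x = h}.Finite) : (centralizer {g}).FiniteIndex := by
  have horbit : (MulAction.orbit (ConjAct G) g).Finite :=
    hg.subset fun _ ⟨c, hc⟩ ↦ ⟨(ConjAct.ofConjAct c)⁻¹, by simpa [ConjAct.smul_def] using hc⟩
  rw [finiteIndex_iff, centralizer_eq_comap_stabilizer]
  convert_to (MulAction.stabilizer (ConjAct G) g).index ≠ 0 using 1
  · exact index_comap_of_surjective _ ConjAct.toConjAct.surjective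
  rw [MulAction.index_stabilizer]
  exact ((Set.ncard_pos horbit).mpr (MulAction.nonempty_orbit g)).ne'

lemma finiteIndex_centralizer_pair {a b : G} [(centralizer {a}).FiniteIndex]
    [(centralizer {b}).FiniteIndex] : (centralizer {a, b}).FiniteIndex :=
  finiteIndex_of_le (H := centralizer {a} ⊓ centralizer {b}) fun _ ⟨ha, hb⟩ ↦ by
    simp_all [mem_centralizer_iff]

lemma finiteIndex_center_closure {s : Set G} [(centralizer s).FiniteIndex] :
    (center (closure s)).FiniteIndex := by
  refine finiteIndex_of_le (H := (centralizer s).subgroupOf (closure s)) fun z hz ↦ ?_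
  rw [mem_subgroupOf, ← centralizer_closure] at hz
  exact mem_center_iff.mpr fun g ↦ Subtype.ext (hz g g.2)

lemma commutatorElement_mul_mem_center_left {z : G} (g h : G) (hz : z ∈ center G) :
    ⁅g * z, h⁆ = ⁅g, h⁆ := by
  rw [commutatorElement_def, commutatorElement_def, mul_inv_rev, mul_assoc g,
    ← mem_center_iff.mp hz h]
  group

lemma commutatorElement_mul_mem_center_right {w : G} (g h : G) (hw : w ∈ center G) :
    ⁅g, h * w⁆ = ⁅g, h⁆ := by
  rw [← commutatorElement_inv, commutatorElement_mul_mem_center_left h g hw,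
    commutatorElement_inv]

instance finite_commutatorSet_of_finiteIndex_center [(center G).FiniteIndex] :
    Finite (commutatorSet G) := by
  let F : (G ⧸ center G) × (G ⧸ center G) → G := fun p ↦ ⁅p.1.out, p.2.out⁆
  refine Set.Finite.to_subtype ((Set.finite_range F).subset ?_)
  rintro _ ⟨g, h, rfl⟩
  obtain ⟨z, hz⟩ := QuotientGroup.mk_out_eq_mul (center G) g
  obtain ⟨w, hw⟩ := QuotientGroup.mk_out_eq_mul (center G) h
  exact ⟨(g, h), by simp only [F, hz, hw, commutatorElement_mul_mem_center_left _ _ z.2,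
    commutatorElement_mul_mem_center_right _ _ w.2]⟩

lemma IsOfFinOrder.mul_of_finite_commutator [Finite (commutator G)] {a b : G}
    (ha : IsOfFinOrder a) (hb : IsOfFinOrder b) : IsOfFinOrder (a * b) := by
  have hab : IsOfFinOrder (Abelianization.of (a * b)) := by
    rw [map_mul]
    exact (Abelianization.of.isOfFinOrder ha).mul (Abelianization.of.isOfFinOrder hb)
  obtain ⟨n, hn, hpow⟩ := isOfFinOrder_iff_pow_eq_one.mp hab
  have hmem : (a * b) ^ n ∈ commutator G := by
    rwa [← Abelianization.ker_of, MonoidHom.mem_ker, map_pow]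
  have hpow_torsion : IsOfFinOrder ((a * b) ^ n) :=
    Submonoid.isOfFinOrder_coe.mpr (isMulTorsion_of_finite (⟨_, hmem⟩ : commutator G))
  exact hpow_torsion.of_pow hn.ne'

lemma IsOfFinOrder.mul_of_finite_conj {a b : G} (ha : IsOfFinOrder a) (hb : IsOfFinOrder b)
    (hFCa : {h : G | ∃ x : G, x⁻¹ * a * x = h}.Finite)
    (hFCb : {h : G | ∃ x : G, x⁻¹ * b * x = h}.Finite) : IsOfFinOrder (a * b) := by
  have := finiteIndex_centralizer_of_finite_conj a hFCa
  have := finiteIndex_centralizer_of_finite_conj b hFCb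
  have : (centralizer {a, b}).FiniteIndex := finiteIndex_centralizer_pair
  have : (center (closure {a, b})).FiniteIndex := finiteIndex_center_closure
  let a' : closure {a, b} := ⟨a, subset_closure (by simp)⟩
  let b' : closure {a, b} := ⟨b, subset_closure (by simp)⟩
  have ha' : IsOfFinOrder a' := Submonoid.isOfFinOrder_coe.mp ha
  have hb' : IsOfFinOrder b' := Submonoid.isOfFinOrder_coe.mp hb
  exact Submonoid.isOfFinOrder_coe.mpr (ha'.mul_of_finite_commutator hb')

end

/-- In an FC-group (all conjugacy classes finite), the torsion elements form a
subgroup. -/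
theorem torsion_subgroup_of_FC {G : Type*} [Group G]
    (hFC : ∀ g : G, {h : G | ∃ x : G, x⁻¹ * g * x = h}.Finite) :
    ∃ T : Subgroup G, (T : Set G) = {g : G | IsOfFinOrder g} :=
  ⟨{ carrier := {g | IsOfFinOrder g}
     one_mem' := IsOfFinOrder.one
     mul_mem' := fun ha hb ↦ ha.mul_of_finite_conj hb (hFC _) (hFC _)
     inv_mem' := IsOfFinOrder.inv }, rfl⟩
end

section
/- Let E be a group, and g ∈ E an element of infinite order such that the cyclic subgroup ⟨g⟩ has finite index in E, and such that for every f ∈ E there exists n > 0 with f⁻¹ gⁿ f = gⁿ. Then the center Z(E) has finite index in E. -/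
/-!
Choose a positive exponent `n_f` with `g ^ n_f` commuting with `f` for each of the finitely
many coset representatives `f` of `⟨g⟩`; with `N` the product of these exponents, `g ^ N`
commutes with every representative and with `g`, hence is central. In `E ⧸ Z(E)` the image of
`g` then has finite order, so the image of `⟨g⟩` is a finite subgroup of finite index, and
`E ⧸ Z(E)` is finite.
-/

open Subgroup

section

variable {G : Type*} [Group G]

lemma commute_of_inv_mul_mul_eq {f a : G} (h : f⁻¹ * a * f = a) : Commute f a :=
  (inv_mul_eq_iff_eq_mul.mp (by rwa [← mul_assoc])).symm

lemma exists_pow_mem_center_of_forall_commute_pow {g : G} [(zpowers g).FiniteIndex]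
    (h : ∀ f : G, ∃ n : ℕ, 0 < n ∧ Commute f (g ^ n)) :
    ∃ N : ℕ, 0 < N ∧ g ^ N ∈ center G := by
  have := Fintype.ofFinite (G ⧸ zpowers g)
  choose n hn_pos hn using h
  let N := ∏ q : G ⧸ zpowers g, n q.out
  refine ⟨N, Finset.prod_pos fun q _ ↦ hn_pos q.out, mem_center_iff.mpr fun x ↦ ?_⟩
  obtain ⟨⟨y, hy⟩, hout⟩ := QuotientGroup.mk_out_eq_mul (zpowers g) x
  obtain ⟨k, rfl⟩ := mem_zpowers_iff.mp hy
  set r := (x : G ⧸ zpowers g).out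
  have hx : x = r * (g ^ k)⁻¹ := by rw [hout, mul_inv_cancel_right]
  have hr_comm : Commute r (g ^ N) := by
    obtain ⟨m, hm⟩ : n r ∣ N :=
      Finset.dvd_prod_of_mem (fun q : G ⧸ zpowers g ↦ n q.out) (Finset.mem_univ _)
    rw [hm, pow_mul]
    exact (hn r).pow_right m
  have hgk_comm : Commute (g ^ k)⁻¹ (g ^ N) :=
    (((Commute.refl g).zpow_left k).pow_right N).inv_left
  rw [hx]
  exact (hr_comm.mul_left hgk_comm).eq

lemma finiteIndex_of_pow_mem {H : Subgroup G} [H.Normal] {g : G} [(zpowers g).FiniteIndex]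
    {N : ℕ} (hN : 0 < N) (hgN : g ^ N ∈ H) : H.FiniteIndex := by
  have hmap : (zpowers g).map (QuotientGroup.mk' H) = zpowers (g : G ⧸ H) :=
    MonoidHom.map_zpowers _ g
  have hfin : Finite (zpowers (g : G ⧸ H)) := by
    refine IsOfFinOrder.finite_zpowers (isOfFinOrder_iff_pow_eq_one.mpr ⟨N, hN, ?_⟩)
    exact (QuotientGroup.eq_one_iff _).mpr hgN
  have hfi : (zpowers (g : G ⧸ H)).FiniteIndex := by
    rw [finiteIndex_iff, ← hmap]
    exact ne_zero_of_dvd_ne_zero FiniteIndex.index_ne_zero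
      (index_map_dvd _ (QuotientGroup.mk'_surjective H))
  have : Finite (G ⧸ H) := (finite_iff_finite_and_finiteIndex _).mpr ⟨hfin, hfi⟩
  exact finiteIndex_of_finite_quotient

end

theorem center_finiteIndex_general {E : Type*} [Group E] (g : E)
    (hfi : (Subgroup.zpowers g).FiniteIndex)
    (hconj : ∀ f : E, ∃ n : ℕ, 0 < n ∧ f⁻¹ * g ^ n * f = g ^ n) :
    (Subgroup.center E).FiniteIndex := by
  obtain ⟨N, hN, hcenter⟩ := exists_pow_mem_center_of_forall_commute_pow fun f ↦
    (hconj f).imp fun _ ⟨hn, h⟩ ↦ ⟨hn, commute_of_inv_mul_mul_eq h⟩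
  exact finiteIndex_of_pow_mem hN hcenter

/-- If `g ∈ E` has infinite order, `⟨g⟩` has finite index in `E`, and every
element of `E` commutes with some positive power of `g`, then the center of `E`
has finite index. -/
theorem center_finiteIndex {E : Type*} [Group E] (g : E)
    (hg : ¬ IsOfFinOrder g) (hfi : (Subgroup.zpowers g).FiniteIndex)
    (hconj : ∀ f : E, ∃ n : ℕ, 0 < n ∧ f⁻¹ * g ^ n * f = g ^ n) :
    (Subgroup.center E).FiniteIndex :=
  center_finiteIndex_general g hfi hconj
end

section
/- Let E be a group containing a central element g of infinite order such that ⟨g⟩ has finite index in E. Then the set of torsion elements of E forms a finite subgroup of E. -/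
/-!
For a central subgroup `H` of finite index `n`, the transfer `G →* H` is `x ↦ x ^ n`. If `H` is
torsion-free, its kernel is exactly the set of torsion elements: for torsion `x`, the element
`x ^ n` is torsion in `H`, hence trivial. The kernel meets `H` trivially, so it embeds into the
finite quotient `G ⧸ H`. Apply this to `H = ⟨g⟩`.
-/

namespace Subgroup

variable {G : Type*} [Group G] {H : Subgroup G}

lemma isMulCommutative_of_le_center (hH : H ≤ center G) : IsMulCommutative H :=
  ⟨⟨fun a b => Subtype.ext (mem_center_iff.mp (hH b.2) a)⟩⟩

open scoped IsMulCommutative in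
noncomputable def transferPow (hH : H ≤ center G) [H.FiniteIndex] : G →* H :=
  haveI := isMulCommutative_of_le_center hH
  MonoidHom.transfer (MonoidHom.id H)

open scoped IsMulCommutative in
lemma coe_transferPow (hH : H ≤ center G) [H.FiniteIndex] (x : G) :
    (transferPow hH x : G) = x ^ H.index :=
  haveI := isMulCommutative_of_le_center hH
  congrArg Subtype.val <| MonoidHom.transfer_eq_pow _ x fun _ _ hk => by
    rw [← mul_right_inj, ← (hH hk).comm, mul_inv_cancel_right]

lemma mem_ker_transferPow_iff (hH : H ≤ center G) [H.FiniteIndex] {x : G} :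
    x ∈ (transferPow hH).ker ↔ x ^ H.index = 1 := by
  rw [MonoidHom.mem_ker, ← Subtype.val_inj, coe_transferPow, OneMemClass.coe_one]

lemma mem_ker_transferPow_iff_isOfFinOrder (hH : H ≤ center G) [H.FiniteIndex]
    (htf : ∀ y ∈ H, IsOfFinOrder y → y = 1) {x : G} :
    x ∈ (transferPow hH).ker ↔ IsOfFinOrder x := by
  rw [mem_ker_transferPow_iff]
  refine ⟨fun hx => isOfFinOrder_iff_pow_eq_one.mpr
      ⟨_, Nat.pos_of_ne_zero FiniteIndex.index_ne_zero, hx⟩,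
    fun hx => htf _ ?_ hx.pow⟩
  rw [← coe_transferPow hH]
  exact SetLike.coe_mem _

lemma finite_of_disjoint_of_finiteIndex {K : Subgroup G} [H.FiniteIndex] (hHK : Disjoint H K) :
    Finite K := by
  have : (H.subgroupOf K).index ≠ 0 := FiniteIndex.index_ne_zero
  rw [subgroupOf_eq_bot.mpr hHK, index_bot] at this
  exact Nat.finite_of_card_ne_zero this

theorem exists_finite_subgroup_eq_torsion (hH : H ≤ center G) [H.FiniteIndex]
    (htf : ∀ y ∈ H, IsOfFinOrder y → y = 1) :
    ∃ T : Subgroup G, (T : Set G) = {x | IsOfFinOrder x} ∧ (T : Set G).Finite := by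
  set T := (transferPow hH).ker
  have hT : (T : Set G) = {x | IsOfFinOrder x} :=
    Set.ext fun _ => mem_ker_transferPow_iff_isOfFinOrder hH htf
  have hHT : Disjoint H T := disjoint_def.mpr fun hyH hyT =>
    htf _ hyH ((mem_ker_transferPow_iff_isOfFinOrder hH htf).mp hyT)
  have := finite_of_disjoint_of_finiteIndex hHT
  exact ⟨T, hT, Set.toFinite _⟩

end Subgroup

lemma eq_one_of_mem_zpowers_of_isOfFinOrder {G : Type*} [Group G] {g y : G}
    (hg : ¬IsOfFinOrder g) (hy : y ∈ Subgroup.zpowers g) (hfin : IsOfFinOrder y) : y = 1 := by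
  obtain ⟨m, rfl⟩ := hy
  obtain ⟨k, hk, hgk⟩ := hfin.exists_pow_eq_one
  have : m * k = 0 :=
    injective_zpow_iff_not_isOfFinOrder.mpr hg (by simpa [zpow_mul] using hgk)
  simp [(mul_eq_zero.mp this).resolve_right (by omega)]

/-- If `E` contains a central infinite-order element `g` with `⟨g⟩` of finite
index, then the torsion elements of `E` form a finite subgroup. -/
theorem torsion_finite_subgroup {E : Type*} [Group E] (g : E)
    (hg : ¬ IsOfFinOrder g) (hcentral : ∀ x : E, g * x = x * g)
    (hfi : (Subgroup.zpowers g).FiniteIndex) :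
    ∃ T : Subgroup E, (T : Set E) = {x : E | IsOfFinOrder x} ∧
      (T : Set E).Finite :=
  Subgroup.exists_finite_subgroup_eq_torsion
    (Subgroup.zpowers_le.mpr (Subgroup.mem_center_iff.mpr fun x => (hcentral x).symm))
    fun _ => eq_one_of_mem_zpowers_of_isOfFinOrder hg
end

section
/- (B. H. Neumann) Let G be a group covered by finitely many left cosets of subgroups: G = ⋃_{i=1}^{n} x_i H_i, where H₁, …, Hₙ are subgroups of G and x₁, …, xₙ ∈ G. Then at least one of the subgroups H_i has finite index in G. -/
open scoped Pointwise

/-- B. H. Neumann's covering theorem: if a group is covered by finitely many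
left cosets of subgroups, then one of the subgroups has finite index. -/
theorem neumann_coset_covering {G : Type*} [Group G] (n : ℕ)
    (H : Fin n → Subgroup G) (x : Fin n → G)
    (hcov : ∀ g : G, ∃ i : Fin n, (x i)⁻¹ * g ∈ H i) :
    ∃ i : Fin n, (H i).FiniteIndex := by
  have hcovers : ⋃ i ∈ (Finset.univ : Finset (Fin n)), (x i) • (H i : Set G) = Set.univ := by
    refine Set.eq_univ_of_forall fun g => ?_
    obtain ⟨i, hi⟩ := hcov g
    exact Set.mem_biUnion (Finset.mem_univ i) (by rwa [mem_leftCoset_iff])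
  obtain ⟨k, _, hk⟩ := Subgroup.exists_finiteIndex_of_leftCoset_cover hcovers
  exact ⟨k, hk⟩
end

section
/- Let S be a group, a₁, …, aₙ ∈ S, and suppose S = ⋃_{i=1}^{n} x_i C_S(a_i) for some x₁, …, xₙ ∈ S, where C_S(a) denotes the centralizer of a in S. Then there exists an index i such that the conjugacy class of a_i in S is finite. -/
/-!
By orbit–stabilizer, an element has finitely many conjugates exactly when its centralizer has
finite index. The hypothesis covers the group by finitely many left cosets of centralizers, and by
B. H. Neumann's lemma one of the subgroups in such a cover has finite index.
-/

open MulAction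
open scoped Pointwise

namespace Subgroup

variable {G : Type*} [Group G]

theorem exists_finiteIndex_of_forall_inv_mul_mem {ι : Type*} [Finite ι] (H : ι → Subgroup G)
    (x : ι → G) (hcov : ∀ g : G, ∃ i, (x i)⁻¹ * g ∈ H i) : ∃ i, (H i).FiniteIndex := by
  have := Fintype.ofFinite ι
  have hcovers : ⋃ i ∈ Finset.univ, x i • (H i : Set G) = Set.univ :=
    Set.eq_univ_of_forall fun g => by
      obtain ⟨i, hi⟩ := hcov g
      exact Set.mem_biUnion (Finset.mem_univ i) ((mem_leftCoset_iff (x i)).mpr hi)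
  obtain ⟨i, -, hi⟩ := exists_finiteIndex_of_leftCoset_cover hcovers
  exact ⟨i, hi⟩

theorem index_centralizer_eq_ncard_orbit (a : G) :
    (centralizer {a}).index = (orbit (ConjAct G) a).ncard := by
  rw [centralizer_eq_comap_stabilizer, ← index_stabilizer]
  exact index_comap_of_surjective _ ConjAct.toConjAct.surjective

end Subgroup

theorem ConjAct.finite_orbit_iff_finiteIndex_centralizer {G : Type*} [Group G] (a : G) :
    (orbit (ConjAct G) a).Finite ↔ (Subgroup.centralizer {a}).FiniteIndex := by
  rw [Subgroup.finiteIndex_iff, Subgroup.index_centralizer_eq_ncard_orbit]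
  exact ⟨fun h => ((Set.ncard_pos h).mpr ⟨a, mem_orbit_self a⟩).ne', Set.finite_of_ncard_ne_zero⟩

/-- If `S` is covered by finitely many left cosets of centralizers of elements
`a i`, then some `a i` has a finite conjugacy class. -/
theorem finite_conjugacy_class_of_centralizer_coset_cover {S : Type*} [Group S]
    (n : ℕ) (a x : Fin n → S)
    (hcov : ∀ g : S, ∃ i : Fin n, (x i)⁻¹ * g ∈ Subgroup.centralizer {a i}) :
    ∃ i : Fin n, {h : S | ∃ g : S, g⁻¹ * a i * g = h}.Finite := by
  obtain ⟨i, hi⟩ :=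
    Subgroup.exists_finiteIndex_of_forall_inv_mul_mem (fun i => Subgroup.centralizer {a i}) x hcov
  refine ⟨i, ((ConjAct.finite_orbit_iff_finiteIndex_centralizer (a i)).mpr hi).subset ?_⟩
  rintro _ ⟨g, rfl⟩
  exact ⟨ConjAct.toConjAct g⁻¹, (ConjAct.toConjAct_smul g⁻¹ (a i)).trans (by rw [inv_inv])⟩
end

section
/- Let G be a group, H a subgroup of G, and N a finite normal subgroup of G. Let K = { h ∈ H : ∀ x ∈ N, h⁻¹ x h = x } be the kernel of the conjugation action of H on N. Then K has finite index in H, and K ≤ H ∩ g⁻¹ H g for every g ∈ N provided K ≤ H. In particular, if for every g ∉ H the intersection H ∩ g⁻¹ H g is finite and H is infinite, then N ≤ H. -/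
/-!
Conjugation gives a homomorphism from `G` to the finite group `MulAut N`, whose kernel is the
centralizer of `N`; so `K = H ⊓ centralizer N` has finite index in `H`. An element `g ∈ N`
commutes with every `k ∈ K`, so `g k g⁻¹ = k ∈ H` and `K ⊆ H ∩ g⁻¹ H g`. If `g ∉ H`, almost
malnormality makes `K` finite, and a finite subgroup of finite index forces `H` to be finite.
-/

open Subgroup

theorem MulAut.ker_conjNormal {G : Type*} [Group G] (N : Subgroup G) [N.Normal] :
    (conjNormal : G →* MulAut N).ker = centralizer (N : Set G) := by
  ext g
  simp only [MonoidHom.mem_ker, mem_centralizer_iff, MulEquiv.ext_iff, MulAut.one_apply,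
    Subtype.ext_iff, conjNormal_apply, mul_inv_eq_iff_eq_mul, Subtype.forall, SetLike.mem_coe]
  exact forall₂_congr fun _ _ => eq_comm

namespace Subgroup

variable {G : Type*} [Group G]

instance finiteIndex_centralizer (N : Subgroup G) [N.Normal] [Finite N] :
    (centralizer (N : Set G)).FiniteIndex := by
  rw [← MulAut.ker_conjNormal]
  infer_instance

theorem finiteIndex_inf_centralizer_subgroupOf (H N : Subgroup G) [N.Normal] [Finite N] :
    ((H ⊓ centralizer (N : Set G)).subgroupOf H).FiniteIndex := by
  rw [inf_subgroupOf_left]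
  infer_instance

theorem coe_inf_centralizer (H : Subgroup G) (s : Set G) :
    ((H ⊓ centralizer s : Subgroup G) : Set G) = {h | h ∈ H ∧ ∀ x ∈ s, h⁻¹ * x * h = x} := by
  ext h
  simp only [SetLike.mem_coe, mem_inf, mem_centralizer_iff, Set.mem_ofPred_eq, mul_assoc,
    inv_mul_eq_iff_eq_mul]

theorem mul_mul_inv_eq_of_mem_centralizer {s : Set G} {g k : G} (hg : g ∈ s)
    (hk : k ∈ centralizer s) : g * k * g⁻¹ = k :=
  mul_inv_eq_of_eq_mul (mem_centralizer_iff.mp hk g hg)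

theorem inf_centralizer_subset_inter_conj (H : Subgroup G) {s : Set G} {g : G} (hg : g ∈ s) :
    ((H ⊓ centralizer s : Subgroup G) : Set G) ⊆ {x | x ∈ H ∧ g * x * g⁻¹ ∈ H} :=
  fun _ ⟨hkH, hk⟩ => ⟨hkH, (mul_mul_inv_eq_of_mem_centralizer hg hk).symm ▸ hkH⟩

theorem finite_of_finite_of_finiteIndex_subgroupOf {K H : Subgroup G} (hKH : K ≤ H) [Finite K]
    [(K.subgroupOf H).FiniteIndex] : Finite H :=
  (finite_iff_finite_and_finiteIndex (K.subgroupOf H)).2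
    ⟨Finite.of_equiv _ (subgroupOfEquivOfLe hKH).symm.toEquiv, inferInstance⟩

theorem le_of_almostMalnormal {H N : Subgroup G} [N.Normal] [Finite N]
    (halm : ∀ g : G, g ∉ H → {x : G | x ∈ H ∧ g * x * g⁻¹ ∈ H}.Finite)
    (hH : (H : Set G).Infinite) : N ≤ H := by
  intro g hg
  by_contra hgH
  have : Finite (H ⊓ centralizer (N : Set G) : Subgroup G) :=
    ((halm g hgH).subset (inf_centralizer_subset_inter_conj H hg)).to_subtype
  have := finiteIndex_inf_centralizer_subgroupOf H N
  have : Finite H :=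
    finite_of_finite_of_finiteIndex_subgroupOf (K := H ⊓ centralizer (N : Set G)) inf_le_left
  exact hH (Set.toFinite _)

end Subgroup

/-- Let `N` be a finite normal subgroup of `G` and `H ≤ G`. The kernel `K` of
the conjugation action of `H` on `N` has finite index in `H`, and
`K ≤ H ∩ g⁻¹Hg` for every `g ∈ N`. In particular, if `H` is infinite and
`H ∩ g⁻¹Hg` is finite for every `g ∉ H`, then `N ≤ H`. -/
theorem finite_normal_subgroup_le_almost_malnormal {G : Type*} [Group G]
    (H N : Subgroup G) (hNn : N.Normal) (hNfin : (N : Set G).Finite) :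
    ∃ K : Subgroup G,
      (K : Set G) = {h : G | h ∈ H ∧ ∀ x ∈ N, h⁻¹ * x * h = x} ∧
      (K.subgroupOf H).FiniteIndex ∧
      (∀ g ∈ N, ∀ k ∈ K, k ∈ H ∧ g * k * g⁻¹ ∈ H) ∧
      ((∀ g : G, g ∉ H → {x : G | x ∈ H ∧ g * x * g⁻¹ ∈ H}.Finite) →
        (H : Set G).Infinite → N ≤ H) := by
  have : Finite N := hNfin.to_subtype
  exact ⟨H ⊓ centralizer (N : Set G), coe_inf_centralizer H N,
    finiteIndex_inf_centralizer_subgroupOf H N,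
    fun g hg _ hk => inf_centralizer_subset_inter_conj H hg hk, le_of_almostMalnormal⟩
end
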